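/- Let A ≥ 0 on H and B = diag(A,...,A) on ⊕ⁿH. Let T = (T_{ij}) be an n×n operator matrix with each T_{ij} admitting an A-adjoint. Define the n×n complex matrix T' with t_{ii} = w_A(T_{ii}) and t_{ij} = ‖T_{ij}‖_A for i ≠ j. Then w_B(T) ≤ w(T'). -/

import Mathlib

open scoped ComplexOrder

/-- The A-numerical radius: `w_A(T) = sup{|⟨ATx,x⟩| : ⟨Ax,x⟩ = 1}` (with the paper's
convention `⟨u,v⟩ = inner v u` in Mathlib's notation). -/
noncomputable def wA {H : Type*} [NormedAddCommGroup H] [InnerProductSpace ℂ H]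
    (A T : H →L[ℂ] H) : ℝ :=
  sSup {r : ℝ | ∃ x : H, (inner ℂ x (A x) : ℂ) = 1 ∧ r = ‖(inner ℂ x (A (T x)) : ℂ)‖}

/-- The A-Crawford number: `m_A(T) = inf{|⟨ATx,x⟩| : ⟨Ax,x⟩ = 1}`. -/
noncomputable def mA {H : Type*} [NormedAddCommGroup H] [InnerProductSpace ℂ H]
    (A T : H →L[ℂ] H) : ℝ :=
  sInf {r : ℝ | ∃ x : H, (inner ℂ x (A x) : ℂ) = 1 ∧ r = ‖(inner ℂ x (A (T x)) : ℂ)‖}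

/-- The A-operator seminorm: `‖T‖_A = sup{‖Tx‖_A/‖x‖_A : x ∈ closure (range A), x ≠ 0}`. -/
noncomputable def normA {H : Type*} [NormedAddCommGroup H] [InnerProductSpace ℂ H]
    (A T : H →L[ℂ] H) : ℝ :=
  sSup {r : ℝ | ∃ x ∈ closure (Set.range A), x ≠ 0 ∧
    r = Real.sqrt ((inner ℂ (T x) (A (T x)) : ℂ)).re / Real.sqrt ((inner ℂ x (A x) : ℂ)).re}

/-- The numerical radius of an operator on a complex Hilbert space. -/
noncomputable def nr {H : Type*} [NormedAddCommGroup H] [InnerProductSpace ℂ H]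
    (T : H →L[ℂ] H) : ℝ :=
  sSup {r : ℝ | ∃ x : H, ‖x‖ = 1 ∧ r = ‖(inner ℂ (T x) x : ℂ)‖}

/-!
Factor `A = P† P` (possible since `A ≥ 0`), so that `⟨A y, x⟩ = ⟨P y, P x⟩` and `‖x‖_A = ‖P x‖`.

An `A`-selfadjoint operator `W` (`A W = W† A`) satisfies `‖P W x‖² ≤ ‖P W² x‖ ‖P x‖` by
Cauchy–Schwarz; iterating this along `W ^ 2 ^ k` and taking `2 ^ k`-th roots gives
`‖P W x‖ ≤ ‖W‖ ‖P x‖`. If `S` is an `A`-adjoint of `T`, then `S T` is `A`-selfadjoint and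
`‖P T x‖² ≤ ‖P S T x‖ ‖P x‖`, so `T` is bounded for the seminorm `‖P ·‖`. This is what makes the
suprema defining `w_A(T)` and `‖T‖_A` finite, whence `|⟨A T x, x⟩| ≤ w_A(T) ‖P x‖²` and
`‖P T x‖ ≤ ‖T‖_A ‖P x‖`; for the latter, project `x` onto `closure (range A)`, whose orthogonal
complement `ker A` is killed by both `P` and `P T`.

Finally, if `⟨B x, x⟩ = 1` then `a_i = ‖P x_i‖` is a unit vector of `ℝⁿ`, and
`|⟨B T x, x⟩| ≤ ∑ |⟨A T_ij x_j, x_i⟩| ≤ ∑ t_ij a_i a_j = ⟨T' a, a⟩ ≤ w(T')`.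
-/

theorem le_of_forall_pow_two_pow_mul_le {q c d C : ℝ} (hc : 0 ≤ c) (hd : 0 < d)
    (h : ∀ k : ℕ, q ^ 2 ^ k * d ≤ C * c ^ 2 ^ k) : q ≤ c := by
  by_contra! hcq
  rcases hc.eq_or_lt with rfl | hc
  · have := h 0
    simp only [pow_zero, pow_one, mul_zero] at this
    nlinarith
  have hq1 : 1 < q / c := (one_lt_div hc).mpr hcq
  obtain ⟨m, hm⟩ := pow_unbounded_of_one_lt (C / d) hq1
  have hbound : (q / c) ^ 2 ^ m ≤ C / d := by
    rw [div_pow, div_le_div_iff₀ (by positivity) hd]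
    linarith [h m]
  exact (hm.trans_le (pow_le_pow_right₀ hq1.le Nat.lt_two_pow_self.le)).not_ge hbound

theorem PiLp.inner_apply_diag {𝕜 ι H : Type*} [RCLike 𝕜] [Fintype ι] [NormedAddCommGroup H]
    [InnerProductSpace 𝕜 H] {A : H →L[𝕜] H}
    {B : PiLp 2 (fun _ : ι => H) →L[𝕜] PiLp 2 (fun _ : ι => H)} (hB : ∀ x i, B x i = A (x i))
    (x y : PiLp 2 fun _ : ι => H) : inner 𝕜 x (B y) = ∑ i, inner 𝕜 (x i) (A (y i)) := by
  simp only [PiLp.inner_apply, hB]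

section SeminormOfFactorization

open ContinuousLinearMap InnerProductSpace

variable {H : Type*} [NormedAddCommGroup H] [InnerProductSpace ℂ H] [CompleteSpace H]

theorem exists_eq_star_mul_self_of_inner_nonneg {A : H →L[ℂ] H} (hA : ∀ x, 0 ≤ ⟪x, A x⟫_ℂ) :
    ∃ P, A = star P * P := by
  refine CStarAlgebra.nonneg_iff_eq_star_mul_self.mp ((nonneg_iff_isPositive A).mpr
    ((isPositive_iff_complex A).mpr fun x => ?_))
  obtain ⟨hre, him⟩ := Complex.nonneg_iff.mp (hA x)
  rw [← inner_conj_symm (A x) x]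
  generalize ⟪x, A x⟫_ℂ = z at hre him
  exact ⟨Complex.ext (by simp) (by simp [← him]), by simpa using hre⟩

theorem inner_apply_eq_inner_apply_of_eq_star_mul_self {A P : H →L[ℂ] H} (hPA : A = star P * P)
    (x y : H) : ⟪x, A y⟫_ℂ = ⟪P x, P y⟫_ℂ := by
  rw [hPA, mul_apply_eq_comp, star_eq_adjoint, adjoint_inner_right]

theorem inner_self_apply_eq_norm_sq {A P : H →L[ℂ] H} (hPA : A = star P * P) (x : H) :
    ⟪x, A x⟫_ℂ = (‖P x‖ : ℂ) ^ 2 := by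
  rw [inner_apply_eq_inner_apply_of_eq_star_mul_self hPA, inner_self_eq_norm_sq_to_K]; rfl

theorem re_inner_self_apply_eq_norm_sq {A P : H →L[ℂ] H} (hPA : A = star P * P) (x : H) :
    (⟪x, A x⟫_ℂ).re = ‖P x‖ ^ 2 := by
  rw [inner_self_apply_eq_norm_sq hPA]; norm_cast

theorem sq_norm_apply_le_of_semiconjBy {A P W : H →L[ℂ] H} (hPA : A = star P * P)
    (hW : SemiconjBy A W (star W)) (x : H) :
    ‖P (W x)‖ ^ 2 ≤ ‖P (W (W x))‖ * ‖P x‖ := by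
  have hAW : A (W x) = adjoint W (A x) := by
    rw [← star_eq_adjoint, ← mul_apply_eq_comp, hW.eq, mul_apply_eq_comp]
  calc ‖P (W x)‖ ^ 2 = (⟪P (W (W x)), P x⟫_ℂ).re := by
        rw [← re_inner_self_apply_eq_norm_sq hPA, hAW, adjoint_inner_right,
          inner_apply_eq_inner_apply_of_eq_star_mul_self hPA]
    _ ≤ ‖⟪P (W (W x)), P x⟫_ℂ‖ := Complex.re_le_norm _
    _ ≤ ‖P (W (W x))‖ * ‖P x‖ := norm_inner_le_norm _ _

theorem pow_two_pow_mul_le_of_semiconjBy {A P W : H →L[ℂ] H} (hPA : A = star P * P)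
    (hW : SemiconjBy A W (star W)) (x : H) (k : ℕ) :
    ‖P (W x)‖ ^ 2 ^ k * ‖P x‖ ≤ ‖P ((W ^ 2 ^ k) x)‖ * ‖P x‖ ^ 2 ^ k := by
  induction k with
  | zero => simp
  | succ k ih =>
    rcases (norm_nonneg (P x)).eq_or_lt with hPx | hPx
    · rw [← hPx, mul_zero]; positivity
    have hstep := sq_norm_apply_le_of_semiconjBy hPA (star_pow W (2 ^ k) ▸ hW.pow_right (2 ^ k)) x
    rw [← mul_apply_eq_comp (W ^ 2 ^ k), ← pow_add, ← two_mul, ← pow_succ'] at hstep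
    refine le_of_mul_le_mul_right ?_ hPx
    calc ‖P (W x)‖ ^ 2 ^ (k + 1) * ‖P x‖ * ‖P x‖ = (‖P (W x)‖ ^ 2 ^ k * ‖P x‖) ^ 2 := by ring
      _ ≤ (‖P ((W ^ 2 ^ k) x)‖ * ‖P x‖ ^ 2 ^ k) ^ 2 := by gcongr
      _ = ‖P ((W ^ 2 ^ k) x)‖ ^ 2 * ‖P x‖ ^ 2 ^ (k + 1) := by ring
      _ ≤ ‖P ((W ^ 2 ^ (k + 1)) x)‖ * ‖P x‖ * ‖P x‖ ^ 2 ^ (k + 1) := by gcongr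
      _ = _ := by ring

theorem norm_apply_le_of_semiconjBy {A P W : H →L[ℂ] H} (hPA : A = star P * P)
    (hW : SemiconjBy A W (star W)) (x : H) : ‖P (W x)‖ ≤ ‖W‖ * ‖P x‖ := by
  rcases (norm_nonneg (P x)).eq_or_lt with hPx | hPx
  · have := sq_norm_apply_le_of_semiconjBy hPA hW x
    rw [← hPx, mul_zero] at this ⊢
    exact pow_eq_zero_iff two_ne_zero |>.mp (le_antisymm this (by positivity)) |>.le
  refine le_of_forall_pow_two_pow_mul_le (C := ‖P‖ * ‖x‖) (by positivity) hPx fun k => ?_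
  calc ‖P (W x)‖ ^ 2 ^ k * ‖P x‖ ≤ ‖P ((W ^ 2 ^ k) x)‖ * ‖P x‖ ^ 2 ^ k :=
        pow_two_pow_mul_le_of_semiconjBy hPA hW x k
    _ ≤ ‖P‖ * (‖W‖ ^ 2 ^ k * ‖x‖) * ‖P x‖ ^ 2 ^ k := by
        gcongr
        calc ‖P ((W ^ 2 ^ k) x)‖ ≤ ‖P‖ * (‖W ^ 2 ^ k‖ * ‖x‖) :=
              (le_opNorm _ _).trans (by gcongr; exact le_opNorm _ _)
          _ ≤ ‖P‖ * (‖W‖ ^ 2 ^ k * ‖x‖) := by gcongr; exact norm_pow_le' W (by positivity)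
    _ = ‖P‖ * ‖x‖ * (‖W‖ * ‖P x‖) ^ 2 ^ k := by ring

theorem exists_norm_apply_le_of_comp_eq_adjoint_comp {A P T S : H →L[ℂ] H}
    (hPA : A = star P * P) (hS : A.comp S = (adjoint T).comp A) :
    ∃ C, ∀ x, ‖P (T x)‖ ≤ C * ‖P x‖ := by
  have hS : A * S = star T * A := by rw [star_eq_adjoint]; exact hS
  have hST : SemiconjBy A (S * T) (star (S * T)) := by
    have hA : IsSelfAdjoint A := hPA ▸ IsSelfAdjoint.star_mul_self P
    have h : IsSelfAdjoint (A * (S * T)) := by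
      rw [← mul_assoc, hS]; exact hA.conjugate' T
    have h' := h.star_eq
    rw [star_mul, hA.star_eq] at h'
    exact h'.symm
  refine ⟨Real.sqrt ‖S * T‖, fun x => ?_⟩
  rw [← Real.sqrt_sq (norm_nonneg (P (T x))), ← Real.sqrt_sq (norm_nonneg (P x)),
    ← Real.sqrt_mul (norm_nonneg _)]
  refine Real.sqrt_le_sqrt ?_
  calc ‖P (T x)‖ ^ 2 = (⟪P x, P (S (T x))⟫_ℂ).re := by
        rw [← re_inner_self_apply_eq_norm_sq hPA, ← adjoint_inner_right, ← star_eq_adjoint,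
          ← mul_apply_eq_comp (star T), ← hS, mul_apply_eq_comp,
          inner_apply_eq_inner_apply_of_eq_star_mul_self hPA]
    _ ≤ ‖P x‖ * ‖P (S (T x))‖ := (Complex.re_le_norm _).trans (norm_inner_le_norm _ _)
    _ ≤ ‖P x‖ * (‖S * T‖ * ‖P x‖) := by gcongr; exact norm_apply_le_of_semiconjBy hPA hST x
    _ = ‖S * T‖ * ‖P x‖ ^ 2 := by ring

theorem norm_inner_apply_le_wA {A P T : H →L[ℂ] H} (hPA : A = star P * P)
    (hT : ∃ C, ∀ x, ‖P (T x)‖ ≤ C * ‖P x‖) (x : H) :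
    ‖⟪x, A (T x)⟫_ℂ‖ ≤ wA A T * ‖P x‖ ^ 2 := by
  obtain ⟨C, hC⟩ := hT
  have hCS : ∀ u, ‖⟪u, A (T u)⟫_ℂ‖ ≤ ‖P u‖ * ‖P (T u)‖ := fun u => by
    rw [inner_apply_eq_inner_apply_of_eq_star_mul_self hPA]; exact norm_inner_le_norm _ _
  rcases (norm_nonneg (P x)).eq_or_lt with hPx | hPx
  · simpa [← hPx] using hCS x
  have hbdd : BddAbove {r : ℝ | ∃ u : H, ⟪u, A u⟫_ℂ = 1 ∧ r = ‖⟪u, A (T u)⟫_ℂ‖} := by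
    refine ⟨C, ?_⟩
    rintro _ ⟨u, hu, rfl⟩
    have hPu : ‖P u‖ = 1 := by
      rw [inner_self_apply_eq_norm_sq hPA] at hu
      exact (pow_eq_one_iff_of_nonneg (norm_nonneg _) two_ne_zero).mp (by exact_mod_cast hu)
    simpa [hPu] using (hCS u).trans (mul_le_mul_of_nonneg_left (hC u) (norm_nonneg _))
  set c := ‖P x‖
  set u : H := ((c⁻¹ : ℝ) : ℂ) • x
  have hu : ⟪u, A u⟫_ℂ = 1 := by
    rw [inner_self_apply_eq_norm_sq hPA, map_smul, norm_smul, Complex.norm_real,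
      Real.norm_of_nonneg (by positivity), inv_mul_cancel₀ hPx.ne']
    simp
  have hwA : c⁻¹ * c⁻¹ * ‖⟪x, A (T x)⟫_ℂ‖ ≤ wA A T := by
    refine le_csSup hbdd ⟨u, hu, ?_⟩
    simp only [u, map_smul, inner_smul_left, inner_smul_right, norm_mul, Complex.norm_conj,
      Complex.norm_real, Real.norm_of_nonneg (inv_nonneg.mpr hPx.le), mul_assoc]
  calc ‖⟪x, A (T x)⟫_ℂ‖ = c⁻¹ * c⁻¹ * ‖⟪x, A (T x)⟫_ℂ‖ * c ^ 2 := by field_simp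
    _ ≤ wA A T * c ^ 2 := by gcongr

theorem apply_eq_zero_of_mem_orthogonal_closure_range {A P : H →L[ℂ] H} (hPA : A = star P * P)
    {y : H} (hy : y ∈ A.range.topologicalClosureᗮ) : P y = 0 := by
  have hA : IsSelfAdjoint A := hPA ▸ IsSelfAdjoint.star_mul_self P
  rw [Submodule.orthogonal_closure, orthogonal_range, hA.adjoint_eq, LinearMap.mem_ker] at hy
  have := re_inner_self_apply_eq_norm_sq hPA y
  rw [← coe_coe, hy, inner_zero_right, Complex.zero_re] at this
  exact norm_eq_zero.mp (pow_eq_zero_iff two_ne_zero |>.mp this.symm)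

theorem norm_apply_le_normA {A P T : H →L[ℂ] H} (hPA : A = star P * P)
    (hT : ∃ C, ∀ x, ‖P (T x)‖ ≤ C * ‖P x‖) (x : H) :
    ‖P (T x)‖ ≤ normA A T * ‖P x‖ := by
  obtain ⟨C, hC⟩ := hT
  have hratio : ∀ z, Real.sqrt (⟪T z, A (T z)⟫_ℂ).re / Real.sqrt (⟪z, A z⟫_ℂ).re =
      ‖P (T z)‖ / ‖P z‖ := fun z => by
    simp only [re_inner_self_apply_eq_norm_sq hPA, Real.sqrt_sq (norm_nonneg _)]
  have hbdd : BddAbove {r : ℝ | ∃ z ∈ closure (Set.range A), z ≠ 0 ∧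
      r = Real.sqrt (⟪T z, A (T z)⟫_ℂ).re / Real.sqrt (⟪z, A z⟫_ℂ).re} := by
    refine ⟨max C 0, ?_⟩
    rintro _ ⟨z, -, -, rfl⟩
    rw [hratio]
    exact div_le_of_le_mul₀ (norm_nonneg _) (le_max_right _ _)
      ((hC z).trans (by gcongr; exact le_max_left _ _))
  obtain ⟨z, hzK, y, hyK, rfl⟩ := A.range.topologicalClosure.exists_add_mem_mem_orthogonal x
  have hPy := apply_eq_zero_of_mem_orthogonal_closure_range hPA hyK
  have hPTy : P (T y) = 0 := norm_le_zero_iff.mp (by simpa [hPy] using hC y)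
  simp only [map_add, hPy, hPTy, add_zero]
  rcases (norm_nonneg (P z)).eq_or_lt with hPz | hPz
  · simpa [← hPz] using hC z
  have hz : z ∈ closure (Set.range A) := by
    rw [← coe_coe, ← LinearMap.coe_range, ← Submodule.topologicalClosure_coe]; exact hzK
  have hz0 : z ≠ 0 := by rintro rfl; simp at hPz
  have := le_csSup hbdd ⟨z, hz, hz0, rfl⟩
  rwa [hratio, div_le_iff₀ hPz] at this

theorem norm_inner_apply_le_normA {A P T : H →L[ℂ] H} (hPA : A = star P * P)
    (hT : ∃ C, ∀ x, ‖P (T x)‖ ≤ C * ‖P x‖) (x y : H) :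
    ‖⟪x, A (T y)⟫_ℂ‖ ≤ normA A T * (‖P x‖ * ‖P y‖) := by
  calc ‖⟪x, A (T y)⟫_ℂ‖ ≤ ‖P x‖ * ‖P (T y)‖ := by
        rw [inner_apply_eq_inner_apply_of_eq_star_mul_self hPA]; exact norm_inner_le_norm _ _
    _ ≤ ‖P x‖ * (normA A T * ‖P y‖) := by gcongr; exact norm_apply_le_normA hPA hT y
    _ = normA A T * (‖P x‖ * ‖P y‖) := by ring

theorem norm_inner_apply_le_sum_wA_normA {ι : Type*} [Fintype ι] [DecidableEq ι]
    {A P : H →L[ℂ] H} (hPA : A = star P * P) {M : ι → ι → H →L[ℂ] H}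
    (hM : ∀ i j, ∃ C, ∀ x, ‖P (M i j x)‖ ≤ C * ‖P x‖)
    {B T : PiLp 2 (fun _ : ι => H) →L[ℂ] PiLp 2 (fun _ : ι => H)} (hB : ∀ x i, B x i = A (x i))
    (hT : ∀ x i, T x i = ∑ j, M i j (x j)) (x : PiLp 2 fun _ : ι => H) :
    ‖⟪x, B (T x)⟫_ℂ‖ ≤ ∑ i, ∑ j,
      (if i = j then wA A (M i i) else normA A (M i j)) * (‖P (x i)‖ * ‖P (x j)‖) := by
  simp only [PiLp.inner_apply_diag hB, hT, map_sum, inner_sum]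
  refine (norm_sum_le _ _).trans <| Finset.sum_le_sum fun i _ =>
    (norm_sum_le _ _).trans <| Finset.sum_le_sum fun j _ => ?_
  split_ifs with hij
  · subst hij
    simpa [← sq] using norm_inner_apply_le_wA hPA (hM i i) (x i)
  · exact norm_inner_apply_le_normA hPA (hM i j) _ _

end SeminormOfFactorization

section NumericalRadius

open InnerProductSpace

variable {E : Type*} [NormedAddCommGroup E] [InnerProductSpace ℂ E]

theorem nr_nonneg (T : E →L[ℂ] E) : 0 ≤ nr T :=
  Real.sSup_nonneg <| by rintro _ ⟨x, -, rfl⟩; positivity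

theorem norm_inner_le_nr (T : E →L[ℂ] E) {u : E} (hu : ‖u‖ = 1) : ‖⟪T u, u⟫_ℂ‖ ≤ nr T := by
  refine le_csSup ⟨‖T‖, ?_⟩ ⟨u, hu, rfl⟩
  rintro _ ⟨w, hw, rfl⟩
  simpa [hw] using (norm_inner_le_norm (T w) w).trans
    (mul_le_mul_of_nonneg_right (T.le_opNorm w) (norm_nonneg w))

theorem sum_mul_mul_le_nr_toEuclideanCLM {ι : Type*} [Fintype ι] [DecidableEq ι]
    (t : Matrix ι ι ℝ) (a : ι → ℝ) (ha : ∑ i, a i ^ 2 = 1) :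
    ∑ i, ∑ j, t i j * (a i * a j) ≤ nr (Matrix.toEuclideanCLM (𝕜 := ℂ) (t.map (↑))) := by
  set v : EuclideanSpace ℂ ι := WithLp.toLp 2 fun i => (a i : ℂ)
  have hv : ‖v‖ = 1 := by
    simp [v, EuclideanSpace.norm_eq, ha]
  have hinner : ⟪Matrix.toEuclideanCLM (𝕜 := ℂ) (t.map (↑)) v, v⟫_ℂ =
      ((∑ i, ∑ j, t i j * (a i * a j) : ℝ) : ℂ) := by
    simp only [v, PiLp.inner_apply, Matrix.toEuclideanCLM_toLp, Matrix.mulVec, dotProduct,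
      Matrix.map_apply, RCLike.inner_apply, map_sum, map_mul, Complex.conj_ofReal, Finset.mul_sum]
    push_cast
    exact Finset.sum_congr rfl fun i _ => Finset.sum_congr rfl fun j _ => by ring
  calc ∑ i, ∑ j, t i j * (a i * a j) ≤ ‖⟪Matrix.toEuclideanCLM (𝕜 := ℂ) (t.map (↑)) v, v⟫_ℂ‖ := by
        rw [hinner, Complex.norm_real]; exact le_abs_self _
    _ ≤ _ := norm_inner_le_nr _ hv

end NumericalRadius

/-- For `A ≥ 0`, `B = diag(A,…,A)` and `T = (M i j)` an `n × n` operator matrix whose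
entries admit A-adjoints, `w_B(T) ≤ w(T')` where `t'_{ii} = w_A(M i i)` and
`t'_{ij} = ‖M i j‖_A` for `i ≠ j`. -/
theorem wB_opMatrix_le (n : ℕ) {H : Type*} [NormedAddCommGroup H]
    [InnerProductSpace ℂ H] [CompleteSpace H] (A : H →L[ℂ] H)
    (hA : ∀ x : H, 0 ≤ (inner ℂ x (A x) : ℂ))
    (M : Fin n → Fin n → (H →L[ℂ] H))
    (hadj : ∀ i j, ∃ S : H →L[ℂ] H,
      A.comp S = (ContinuousLinearMap.adjoint (M i j)).comp A)
    (B T : (PiLp 2 fun _ : Fin n => H) →L[ℂ] (PiLp 2 fun _ : Fin n => H))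
    (hB : ∀ x i, B x i = A (x i))
    (hT : ∀ x, ∀ i, T x i = ∑ j, M i j (x j)) :
    wA B T ≤ nr (Matrix.toEuclideanCLM (𝕜 := ℂ) (Matrix.of fun i j =>
      if i = j then ((wA A (M i i) : ℝ) : ℂ) else ((normA A (M i j) : ℝ) : ℂ))) := by
  obtain ⟨P, hPA⟩ := exists_eq_star_mul_self_of_inner_nonneg hA
  have hM : ∀ i j, ∃ C, ∀ x, ‖P (M i j x)‖ ≤ C * ‖P x‖ := fun i j =>
    (hadj i j).elim fun _ hS => exists_norm_apply_le_of_comp_eq_adjoint_comp hPA hS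
  set t : Matrix (Fin n) (Fin n) ℝ :=
    Matrix.of fun i j => if i = j then wA A (M i i) else normA A (M i j)
  have hmat : (Matrix.of fun i j => if i = j then ((wA A (M i i) : ℝ) : ℂ)
      else ((normA A (M i j) : ℝ) : ℂ)) = t.map (↑) := by
    ext i j; by_cases hij : i = j <;> simp [t, hij]
  rw [hmat]
  refine Real.sSup_le ?_ (nr_nonneg _)
  rintro _ ⟨x, hx, rfl⟩
  have hunit : ∑ i, ‖P (x i)‖ ^ 2 = 1 := by
    simp only [PiLp.inner_apply_diag hB, inner_self_apply_eq_norm_sq hPA] at hx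
    exact_mod_cast hx
  exact (norm_inner_apply_le_sum_wA_normA hPA hM hB hT x).trans
    (sum_mul_mul_le_nr_toEuclideanCLM t _ hunit)
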